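/- Let G be a finite simple graph on vertex set {1,…,n}. Then the following are equivalent: (1) for every edge {i,j} of G, i is adjacentable with j; (2) for every edge {i,j} of G with i < j and every k with i < k < j, one has {i,k} ∈ E(G) or {k,j} ∈ E(G). In particular, G is weakly closed (i.e., some labeling of V(G) satisfies (1)) if and only if some labeling of V(G) satisfies (2). -/
import Mathlib


/-- One allowed interchange: consecutive entries `a t`, `a (t+1)` of the sequence
(permutation) `a` may be swapped when they are adjacent in `G`. -/
def InterchangeStep {n : ℕ} (G : SimpleGraph (Fin n)) (a b : Equiv.Perm (Fin n)) : Prop :=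
  ∃ (t : ℕ) (ht : t + 1 < n),
    G.Adj (a ⟨t, by omega⟩) (a ⟨t + 1, ht⟩) ∧
      b = (Equiv.swap (⟨t, by omega⟩ : Fin n) ⟨t + 1, ht⟩).trans a

/-- `i` is adjacentable with `j`: starting from the sequence `(1, 2, …, n)` (the identity
permutation), finitely many allowed interchanges reach a sequence in which `i` occurs
immediately before `j`. -/
def Adjacentable {n : ℕ} (G : SimpleGraph (Fin n)) (i j : Fin n) : Prop :=
  ∃ a : Equiv.Perm (Fin n), Relation.ReflTransGen (InterchangeStep G) (Equiv.refl (Fin n)) a ∧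
    ∃ (t : ℕ) (ht : t + 1 < n), a ⟨t, by omega⟩ = i ∧ a ⟨t + 1, ht⟩ = j

lemma swap_trans_apply {n : ℕ} (a : Equiv.Perm (Fin n)) (t : ℕ) (ht : t + 1 < n)
    (p : ℕ) (hp : p < n) :
    ((Equiv.swap (⟨t, by omega⟩ : Fin n) ⟨t + 1, ht⟩).trans a) ⟨p, hp⟩ =
      if p = t then a ⟨t + 1, ht⟩ else if p = t + 1 then a ⟨t, by omega⟩ else a ⟨p, hp⟩ := by
  rw [Equiv.trans_apply, Equiv.swap_apply_def]
  split_ifs with h1 h2 h3 h4 h5 <;> simp_all [Fin.ext_iff]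

lemma window_mem {n : ℕ} (a b : Equiv.Perm (Fin n)) (s t : ℕ)
    (hout : ∀ p (hp : p < n), p < s ∨ t < p → b ⟨p, hp⟩ = a ⟨p, hp⟩) :
    ∀ p (hp : p < n), s ≤ p → p ≤ t →
      ∃ (r : ℕ) (hr : r < n), s ≤ r ∧ r ≤ t ∧ b ⟨p, hp⟩ = a ⟨r, hr⟩ := by
  intro p hp hsp hpt
  refine ⟨(a.symm (b ⟨p, hp⟩) : Fin n), (a.symm (b ⟨p, hp⟩)).isLt, ?_, ?_,
    by rw [Fin.eta]; exact (a.apply_symm_apply _).symm⟩ <;>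
  · by_contra hcon
    push_neg at hcon
    have h1 := hout _ (a.symm (b ⟨p, hp⟩)).isLt (by omega)
    rw [Fin.eta] at h1
    have h2 : b (a.symm (b ⟨p, hp⟩)) = b ⟨p, hp⟩ := by
      rw [h1, Equiv.apply_symm_apply]
    have h3 : a.symm (b ⟨p, hp⟩) = ⟨p, hp⟩ := b.injective h2
    have h4 : ((a.symm (b ⟨p, hp⟩) : Fin n) : ℕ) = p := by rw [h3]
    omega

lemma fin_mk_inj {n : ℕ} (b : Equiv.Perm (Fin n)) {p q : ℕ} {hp : p < n} {hq : q < n}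
    (h : b ⟨p, hp⟩ = b ⟨q, hq⟩) : p = q := by
  have := b.injective h
  simpa [Fin.ext_iff] using this

lemma mainD {n : ℕ} (G : SimpleGraph (Fin n))
    (hH : ∀ u w k : Fin n, G.Adj u w → u < k → k < w → G.Adj u k ∨ G.Adj k w) :
    ∀ g L : ℕ, ∀ (u w : Fin n) (a : Equiv.Perm (Fin n)) (s t : ℕ) (hs : s < n) (ht : t < n),
      (w : ℕ) - u = g → t - s = L → s < t → G.Adj u w → (u : ℕ) < w →
      a ⟨s, hs⟩ = u → a ⟨t, ht⟩ = w →
      (∀ p (hp : p < n), s < p → p < t → (u : ℕ) < a ⟨p, hp⟩ ∧ ((a ⟨p, hp⟩ : Fin n) : ℕ) < w) →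
      (∀ p q (hp : p < n) (hq : q < n), s < p → p < q → q < t →
        ((a ⟨p, hp⟩ : Fin n) : ℕ) < a ⟨q, hq⟩) →
      ∃ b, Relation.ReflTransGen (InterchangeStep G) a b ∧
        ∃ (q : ℕ) (hq1 : q < n) (hq2 : q + 1 < n), s ≤ q ∧ q + 1 ≤ t ∧
          b ⟨q, hq1⟩ = u ∧ b ⟨q + 1, hq2⟩ = w ∧
          (∀ p (hp : p < n), p < s ∨ t < p → b ⟨p, hp⟩ = a ⟨p, hp⟩) ∧
          (∀ p1 p2 (h1 : p1 < n) (h2 : p2 < n), s ≤ p1 → p1 < p2 → p2 < q →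
            ((b ⟨p1, h1⟩ : Fin n) : ℕ) < b ⟨p2, h2⟩) := by
  intro g
  induction g using Nat.strong_induction_on with
  | _ g IHg =>
  intro L
  induction L using Nat.strong_induction_on with
  | _ L IHL =>
  intro u w a s t hs ht hg hL hst hadj huw has hat hmid hsort
  by_cases hL1 : t = s + 1
  · subst hL1
    refine ⟨a, Relation.ReflTransGen.refl, s, hs, ht, le_refl s, le_refl _, has, hat, ?_, ?_⟩
    · intro p hp _; rfl
    · intro p1 p2 h1 h2 hsp1 hp12 hp2q; omega
  · -- t ≥ s + 2
    have hs1 : s + 1 < n := by omega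
    have hv1b := hmid (s + 1) hs1 (by omega) (by omega)
    by_cases hA : G.Adj u (a ⟨s + 1, hs1⟩)
    · -- Case 1: swap u with the first middle element, then recurse on shorter window
      set a1 := (Equiv.swap (⟨s, by omega⟩ : Fin n) ⟨s + 1, hs1⟩).trans a with ha1
      have hstep : InterchangeStep G a a1 := ⟨s, hs1, by rw [has]; exact hA, rfl⟩
      have ha1s : a1 ⟨s, hs⟩ = a ⟨s + 1, hs1⟩ := by
        show ((Equiv.swap (⟨s, by omega⟩ : Fin n) ⟨s + 1, hs1⟩).trans a) ⟨s, hs⟩ = _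
        rw [swap_trans_apply, if_pos rfl]
      have ha1s1 : a1 ⟨s + 1, hs1⟩ = u := by
        show ((Equiv.swap (⟨s, by omega⟩ : Fin n) ⟨s + 1, hs1⟩).trans a) ⟨s + 1, hs1⟩ = _
        rw [swap_trans_apply, if_neg (by omega), if_pos rfl]; exact has
      have ha1t : a1 ⟨t, ht⟩ = w := by
        show ((Equiv.swap (⟨s, by omega⟩ : Fin n) ⟨s + 1, hs1⟩).trans a) ⟨t, ht⟩ = _
        rw [swap_trans_apply, if_neg (by omega), if_neg (by omega)]; exact hat
      have ha1other : ∀ p (hp : p < n), p ≠ s → p ≠ s + 1 → a1 ⟨p, hp⟩ = a ⟨p, hp⟩ := by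
        intro p hp h1 h2
        show ((Equiv.swap (⟨s, by omega⟩ : Fin n) ⟨s + 1, hs1⟩).trans a) ⟨p, hp⟩ = _
        rw [swap_trans_apply, if_neg h1, if_neg h2]
      obtain ⟨b, hreach, q, hq1, hq2, hqge, hqle, hbu, hbw, hout, hasc⟩ :=
        IHL (t - (s + 1)) (by omega) u w a1 (s + 1) t hs1 ht hg rfl (by omega) hadj huw
          ha1s1 ha1t
          (fun p hp h1 h2 => by
            rw [ha1other p hp (by omega) (by omega)]; exact hmid p hp (by omega) h2)
          (fun p q hp hq h1 h2 h3 => by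
            rw [ha1other p hp (by omega) (by omega), ha1other q hq (by omega) (by omega)]
            exact hsort p q hp hq (by omega) h2 h3)
      refine ⟨b, Relation.ReflTransGen.head hstep hreach, q, hq1, hq2, by omega, hqle,
        hbu, hbw, ?_, ?_⟩
      · intro p hp hpo
        exact (hout p hp (by omega)).trans (ha1other p hp (by omega) (by omega))
      · intro p1 p2 h1 h2 hsp1 h12 h2q
        by_cases hps : p1 = s
        · subst hps
          have e1 : b ⟨p1, h1⟩ = a ⟨p1 + 1, hs1⟩ :=
            (hout p1 h1 (by omega)).trans ha1s
          obtain ⟨r, hr, hrge, hrle, hbr⟩ :=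
            window_mem a1 b (p1 + 1) t hout p2 h2 (by omega) (by omega)
          have hrne1 : r ≠ p1 + 1 := by
            intro hcon
            have hb2u : b ⟨p2, h2⟩ = u := by
              rw [hbr]
              subst hcon
              exact ha1s1
            have : p2 = q := fin_mk_inj b (hb2u.trans hbu.symm)
            omega
          have hrnet : r ≠ t := by
            intro hcon
            have hb2w : b ⟨p2, h2⟩ = w := by
              rw [hbr]
              subst hcon
              exact ha1t
            have : p2 = q + 1 := fin_mk_inj b (hb2w.trans hbw.symm)
            omega
          have hbr' : b ⟨p2, h2⟩ = a ⟨r, hr⟩ :=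
            hbr.trans (ha1other r hr (by omega) (by omega))
          have hlt : ((a ⟨p1 + 1, hs1⟩ : Fin n) : ℕ) < a ⟨r, hr⟩ :=
            hsort (p1 + 1) r hs1 hr (by omega) (by omega) (by omega)
          have c1 := congrArg Fin.val e1
          have c2 := congrArg Fin.val hbr'
          omega
        · exact hasc p1 p2 h1 h2 (by omega) h12 h2q
    · -- Case 2: first middle not adjacent to u, hence adjacent to w
      have hBadj : G.Adj (a ⟨s + 1, hs1⟩) w :=
        (hH u w (a ⟨s + 1, hs1⟩) hadj hv1b.1 hv1b.2).resolve_left hA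
      obtain ⟨b1, hr1, q1, hq11, hq12, hq1ge, hq1le, hb1v, hb1w, hout1, hasc1⟩ :=
        IHg ((w : ℕ) - (a ⟨s + 1, hs1⟩ : Fin n)) (by omega) (t - (s + 1))
          (a ⟨s + 1, hs1⟩) w a (s + 1) t hs1 ht rfl rfl (by omega) hBadj hv1b.2 rfl hat
          (fun p hp h1 h2 =>
            ⟨hsort (s + 1) p hs1 hp (by omega) h1 h2, (hmid p hp (by omega) h2).2⟩)
          (fun p q hp hq h1 h2 h3 => hsort p q hp hq (by omega) h2 h3)
      -- swap v1 and w at positions q1, q1+1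
      set b2 := (Equiv.swap (⟨q1, by omega⟩ : Fin n) ⟨q1 + 1, hq12⟩).trans b1 with hb2def
      have hstep : InterchangeStep G b1 b2 := by
        refine ⟨q1, hq12, ?_, rfl⟩
        show G.Adj (b1 ⟨q1, hq11⟩) (b1 ⟨q1 + 1, hq12⟩)
        rw [hb1v, hb1w]; exact hBadj
      have hb2q1 : b2 ⟨q1, hq11⟩ = w := by
        show ((Equiv.swap (⟨q1, by omega⟩ : Fin n) ⟨q1 + 1, hq12⟩).trans b1) ⟨q1, hq11⟩ = _
        rw [swap_trans_apply, if_pos rfl]; exact hb1w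
      have hb2other : ∀ p (hp : p < n), p ≠ q1 → p ≠ q1 + 1 → b2 ⟨p, hp⟩ = b1 ⟨p, hp⟩ := by
        intro p hp h1 h2
        show ((Equiv.swap (⟨q1, by omega⟩ : Fin n) ⟨q1 + 1, hq12⟩).trans b1) ⟨p, hp⟩ = _
        rw [swap_trans_apply, if_neg h1, if_neg h2]
      have hb2s : b2 ⟨s, hs⟩ = u := by
        rw [hb2other s hs (by omega) (by omega)]
        exact (hout1 s hs (by omega)).trans has
      obtain ⟨b3, hr3, q, hq1f, hq2f, hqge, hqle, hb3u, hb3w, hout3, hasc3⟩ :=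
        IHL (q1 - s) (by omega) u w b2 s q1 hs hq11 hg rfl (by omega) hadj huw hb2s hb2q1
          (fun p hp h1 h2 => by
            rw [hb2other p hp (by omega) (by omega)]
            obtain ⟨r, hr, hrge, hrle, hbr⟩ :=
              window_mem a b1 (s + 1) t hout1 p hp (by omega) (by omega)
            have hrnet : r ≠ t := by
              intro hcon
              have hbw' : b1 ⟨p, hp⟩ = w := by
                rw [hbr]; subst hcon; exact hat
              have : p = q1 + 1 := fin_mk_inj b1 (hbw'.trans hb1w.symm)
              omega
            have hm := hmid r hr (by omega) (by omega)
            have c := congrArg Fin.val hbr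
            exact ⟨by omega, by omega⟩)
          (fun p q hp hq h1 h2 h3 => by
            rw [hb2other p hp (by omega) (by omega), hb2other q hq (by omega) (by omega)]
            exact hasc1 p q hp hq (by omega) h2 h3)
      refine ⟨b3, hr1.trans (Relation.ReflTransGen.head hstep hr3), q, hq1f, hq2f, hqge,
        by omega, hb3u, hb3w, ?_, hasc3⟩
      intro p hp hpo
      exact ((hout3 p hp (by omega)).trans (hb2other p hp (by omega) (by omega))).trans
        (hout1 p hp (by omega))

lemma swap_nat_apply {n : ℕ} (t : ℕ) (ht : t + 1 < n) (z : Fin n) :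
    ((Equiv.swap (⟨t, by omega⟩ : Fin n) ⟨t + 1, ht⟩ z : Fin n) : ℕ)
      = if (z : ℕ) = t then t + 1 else if (z : ℕ) = t + 1 then t else z := by
  rw [Equiv.swap_apply_def]
  split_ifs with h1 h2 h3 h4 h5 <;>
    simp_all [Fin.ext_iff] <;> omega

lemma reach_inv {n : ℕ} (G : SimpleGraph (Fin n)) {a : Equiv.Perm (Fin n)}
    (h : Relation.ReflTransGen (InterchangeStep G) (Equiv.refl (Fin n)) a) :
    ∀ x y : Fin n, x < y → ¬ G.Adj x y → (a.symm x : ℕ) < a.symm y := by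
  induction h with
  | refl => intro x y hxy _; exact hxy
  | @tail b c _ hstep ih =>
    intro x y hxy hnadj
    obtain ⟨t, ht, hadj, rfl⟩ := hstep
    have hsx : (((Equiv.swap (⟨t, by omega⟩ : Fin n) ⟨t + 1, ht⟩).trans b).symm x)
        = Equiv.swap (⟨t, by omega⟩ : Fin n) ⟨t + 1, ht⟩ (b.symm x) := by
      simp [Equiv.symm_trans_apply]
    have hsy : (((Equiv.swap (⟨t, by omega⟩ : Fin n) ⟨t + 1, ht⟩).trans b).symm y)
        = Equiv.swap (⟨t, by omega⟩ : Fin n) ⟨t + 1, ht⟩ (b.symm y) := by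
      simp [Equiv.symm_trans_apply]
    rw [hsx, hsy, swap_nat_apply, swap_nat_apply]
    have hpq : (b.symm x : ℕ) < b.symm y := ih x y hxy hnadj
    have hne : ¬ ((b.symm x : ℕ) = t ∧ (b.symm y : ℕ) = t + 1) := by
      rintro ⟨h1, h2⟩
      apply hnadj
      have e1 : b.symm x = ⟨t, by omega⟩ := Fin.ext h1
      have e2 : b.symm y = ⟨t + 1, ht⟩ := Fin.ext h2
      have f1 : x = b ⟨t, by omega⟩ := by rw [← e1, Equiv.apply_symm_apply]
      have f2 : y = b ⟨t + 1, ht⟩ := by rw [← e2, Equiv.apply_symm_apply]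
      rw [← f1, ← f2] at hadj; exact hadj
    split_ifs <;> omega

lemma adjacentable_of_cond {n : ℕ} (G : SimpleGraph (Fin n))
    (hH : ∀ u w k : Fin n, G.Adj u w → u < k → k < w → G.Adj u k ∨ G.Adj k w)
    {i j : Fin n} (hadj : G.Adj i j) (hij : (i : ℕ) < j) : Adjacentable G i j := by
  obtain ⟨b, hreach, q, hq1, hq2, hqge, hqle, hbu, hbw, -, -⟩ :=
    mainD G hH ((j : ℕ) - i) ((j : ℕ) - i) i j (Equiv.refl (Fin n)) i j i.isLt j.isLt
      rfl rfl hij hadj hij rfl rfl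
      (fun p hp h1 h2 => ⟨h1, h2⟩)
      (fun p q hp hq h1 h2 h3 => h2)
  exact ⟨b, hreach, q, hq2, hbu, hbw⟩

lemma key {n : ℕ} (G : SimpleGraph (Fin n)) :
    (∀ i j : Fin n, G.Adj i j → Adjacentable G i j) ↔
      (∀ i j k : Fin n, G.Adj i j → i < k → k < j → G.Adj i k ∨ G.Adj k j) := by
  constructor
  · intro h i j k hadj hik hkj
    by_contra hcon
    push_neg at hcon
    obtain ⟨a, hreach, t, ht, hai, haj⟩ := h i j hadj
    have inv := reach_inv G hreach
    have pi : a.symm i = ⟨t, by omega⟩ := by rw [← hai, Equiv.symm_apply_apply]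
    have pj : a.symm j = ⟨t + 1, ht⟩ := by rw [← haj, Equiv.symm_apply_apply]
    have h1 := inv i k hik hcon.1
    have h2 := inv k j hkj hcon.2
    rw [pi] at h1
    rw [pj] at h2
    simp only [] at h1 h2
    omega
  · intro hH i j hadj
    have hne : (i : ℕ) ≠ j := fun h => hadj.ne (Fin.ext h)
    by_cases hij : (i : ℕ) < j
    · exact adjacentable_of_cond G hH hadj hij
    · have hji : (j : ℕ) < i := by omega
      obtain ⟨b, hreach, q, hq2, hbj, hbi⟩ :=
        adjacentable_of_cond G hH hadj.symm hji
      have hq1 : q < n := by omega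
      refine ⟨(Equiv.swap (⟨q, by omega⟩ : Fin n) ⟨q + 1, hq2⟩).trans b,
        hreach.tail ⟨q, hq2, ?_, rfl⟩, q, hq2, ?_, ?_⟩
      · show G.Adj (b ⟨q, hq1⟩) (b ⟨q + 1, hq2⟩)
        rw [hbj, hbi]; exact hadj.symm
      · show ((Equiv.swap (⟨q, by omega⟩ : Fin n) ⟨q + 1, hq2⟩).trans b) ⟨q, hq1⟩ = i
        rw [swap_trans_apply, if_pos rfl]; exact hbi
      · show ((Equiv.swap (⟨q, by omega⟩ : Fin n) ⟨q + 1, hq2⟩).trans b) ⟨q + 1, hq2⟩ = j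
        rw [swap_trans_apply, if_neg (by omega), if_pos rfl]; exact hbj

/-- (1) For every edge `{i, j}` of `G`, `i` is adjacentable with `j` iff
(2) for every edge `{i, j}` with `i < j` and every `i < k < j`, `{i,k} ∈ E(G)` or
`{k,j} ∈ E(G)`.  In particular, `G` is weakly closed (some labeling satisfies (1)) iff
some labeling satisfies (2). -/
theorem adjacentable_iff_weaklyClosed_condition {n : ℕ} (G : SimpleGraph (Fin n)) :
    ((∀ i j : Fin n, G.Adj i j → Adjacentable G i j) ↔
      (∀ i j k : Fin n, G.Adj i j → i < k → k < j → G.Adj i k ∨ G.Adj k j)) ∧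
    ((∃ σ : Equiv.Perm (Fin n), ∀ i j : Fin n, G.Adj i j →
        Adjacentable (G.map σ.toEmbedding) (σ i) (σ j)) ↔
      (∃ σ : Equiv.Perm (Fin n), ∀ i j k : Fin n, G.Adj i j → σ i < σ k → σ k < σ j →
        G.Adj i k ∨ G.Adj k j)) := by
  refine ⟨key G, ?_, ?_⟩
  · rintro ⟨σ, h⟩
    refine ⟨σ, ?_⟩
    intro i j k hadj h1 h2
    have hall : ∀ x y : Fin n, (G.map σ.toEmbedding).Adj x y →
        Adjacentable (G.map σ.toEmbedding) x y := by
      intro x y hxy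
      rw [SimpleGraph.map_adj] at hxy
      obtain ⟨i', j', hij', hx, hy⟩ := hxy
      subst hx; subst hy
      exact h i' j' hij'
    have hcond := (key (G.map σ.toEmbedding)).mp hall
    have hmap : (G.map σ.toEmbedding).Adj (σ i) (σ j) :=
      SimpleGraph.map_adj_apply.mpr hadj
    rcases hcond (σ i) (σ j) (σ k) hmap h1 h2 with h' | h'
    · left
      rw [SimpleGraph.map_adj] at h'
      obtain ⟨a, b, hab, ha, hb⟩ := h'
      have ea : a = i := σ.injective ha
      have eb : b = k := σ.injective hb
      subst ea; subst eb; exact hab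
    · right
      rw [SimpleGraph.map_adj] at h'
      obtain ⟨a, b, hab, ha, hb⟩ := h'
      have ea : a = k := σ.injective ha
      have eb : b = j := σ.injective hb
      subst ea; subst eb; exact hab
  · rintro ⟨σ, hc⟩
    refine ⟨σ, ?_⟩
    intro i j hadj
    have hcond : ∀ x y k : Fin n, (G.map σ.toEmbedding).Adj x y → x < k → k < y →
        (G.map σ.toEmbedding).Adj x k ∨ (G.map σ.toEmbedding).Adj k y := by
      intro x y k hxy hlt1 hlt2
      rw [SimpleGraph.map_adj] at hxy
      obtain ⟨i', j', hij', hx, hy⟩ := hxy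
      subst hx; subst hy
      rcases hc i' j' (σ.symm k) hij' (by simpa using hlt1) (by simpa using hlt2) with h' | h'
      · left
        rw [SimpleGraph.map_adj]
        exact ⟨i', σ.symm k, h', rfl, by simp⟩
      · right
        rw [SimpleGraph.map_adj]
        exact ⟨σ.symm k, j', h', by simp, rfl⟩
    exact (key (G.map σ.toEmbedding)).mpr hcond (σ i) (σ j)
      (SimpleGraph.map_adj_apply.mpr hadj)
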